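/- arXiv:1101.0693 — 2 statements merged into one kernel-verified Lean document; each statement's English description precedes it below -/
import Mathlib

section
/- Let ℓ ≥ 4 be an integer and W ≥ ℓ²·2^{ℓ+1} a real number. For 0 ≤ j ≤ ℓ - 3, define f_j(t) = exp((t^{ℓ-1}+t)W)·exp(-(ℓ-3-j)(2t)^{ℓ-1}) and h_j(t) = f_j'(t)/2. Then for every t ≥ 0, h_j(t) ≥ (W/4)·(f_j(t) + 1). -/
theorem hj_lower_bound (ℓ : ℕ) (hℓ : 4 ≤ ℓ) (W : ℝ) (hW : (ℓ : ℝ) ^ 2 * 2 ^ (ℓ + 1) ≤ W)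
    (j : ℕ) (hj : j ≤ ℓ - 3) (t : ℝ) (ht : 0 ≤ t) :
    W / 4 * (Real.exp ((t ^ (ℓ - 1) + t) * W) * Real.exp (-(((ℓ - 3 - j : ℕ) : ℝ)) * (2 * t) ^ (ℓ - 1)) + 1)
      ≤ deriv (fun s : ℝ =>
          Real.exp ((s ^ (ℓ - 1) + s) * W) * Real.exp (-(((ℓ - 3 - j : ℕ) : ℝ)) * (2 * s) ^ (ℓ - 1))) t / 2 := by
  set n := ℓ - 1 with hn
  set m : ℝ := ((ℓ - 3 - j : ℕ) : ℝ) with hmdef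
  have hn3 : 3 ≤ n := by omega
  have hm0 : 0 ≤ m := Nat.cast_nonneg _
  -- key numeric bound : m * 2 ^ n ≤ W
  have hnat : (ℓ - 3 - j) * 2 ^ n ≤ ℓ ^ 2 * 2 ^ (ℓ + 1) := by
    have h1 : ℓ - 3 - j ≤ ℓ ^ 2 := by nlinarith [Nat.sub_le ℓ 3, Nat.sub_le (ℓ - 3) j]
    have h2 : 2 ^ n ≤ 2 ^ (ℓ + 1) := Nat.pow_le_pow_right (by norm_num) (by omega)
    exact Nat.mul_le_mul h1 h2
  have hmW : m * 2 ^ n ≤ W := by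
    have := (Nat.cast_le (α := ℝ)).2 hnat
    push_cast at this
    linarith
  have hW0 : (0:ℝ) ≤ W := le_trans (by positivity) hW
  -- rewrite as a single exponential
  simp only [← Real.exp_add]
  have hd : ∀ s : ℝ, HasDerivAt (fun s : ℝ => (s ^ n + s) * W + -m * (2 * s) ^ n)
      (((n : ℝ) * s ^ (n - 1) + 1) * W + -m * ((n : ℝ) * (2 * s) ^ (n - 1) * 2)) s := by
    intro s
    have h1 : HasDerivAt (fun s : ℝ => (s ^ n + s) * W) (((n : ℝ) * s ^ (n - 1) + 1) * W) s :=
      ((hasDerivAt_pow n s).add (hasDerivAt_id s)).mul_const W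
    have h2 : HasDerivAt (fun s : ℝ => (2 * s) ^ n) ((n : ℝ) * (2 * s) ^ (n - 1) * 2) s := by
      have := ((hasDerivAt_id s).const_mul (2:ℝ)).fun_pow n
      simpa using this
    exact h1.add (h2.const_mul (-m))
  rw [((hd t).exp).deriv]
  set E := Real.exp ((t ^ n + t) * W + -m * (2 * t) ^ n) with hE
  have hE1 : 1 ≤ E := by
    rw [hE]
    have : (0:ℝ) ≤ (t ^ n + t) * W + -m * (2 * t) ^ n := by
      have h2t : (2 * t) ^ n = 2 ^ n * t ^ n := mul_pow 2 t n
      have htn : 0 ≤ t ^ n := pow_nonneg ht n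
      have : m * (2 ^ n * t ^ n) ≤ W * t ^ n := by
        rw [← mul_assoc]; exact mul_le_mul_of_nonneg_right hmW htn
      nlinarith [mul_nonneg ht hW0]
    calc (1:ℝ) = Real.exp 0 := Real.exp_zero.symm
      _ ≤ _ := Real.exp_le_exp.2 this
  set D := ((n : ℝ) * t ^ (n - 1) + 1) * W + -m * ((n : ℝ) * (2 * t) ^ (n - 1) * 2) with hD
  have hDW : W ≤ D := by
    rw [hD]
    have h2t : (2 * t) ^ (n - 1) = 2 ^ (n - 1) * t ^ (n - 1) := mul_pow 2 t (n - 1)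
    have htn : (0:ℝ) ≤ t ^ (n - 1) := pow_nonneg ht _
    have hn0 : (0:ℝ) ≤ (n:ℝ) := Nat.cast_nonneg n
    have h2n : (2:ℝ) ^ (n - 1) * 2 = 2 ^ n := by
      rw [← pow_succ]; congr 1; omega
    have key : m * (2 ^ (n - 1) * t ^ (n - 1) * 2) ≤ W * t ^ (n - 1) := by
      have : m * (2 ^ (n - 1) * t ^ (n - 1) * 2) = m * 2 ^ n * t ^ (n - 1) := by
        rw [← h2n]; ring
      rw [this]
      exact mul_le_mul_of_nonneg_right hmW htn
    rw [h2t]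
    nlinarith [mul_le_mul_of_nonneg_left key hn0, mul_nonneg hn0 (mul_nonneg htn hW0)]
  have hE0 : (0:ℝ) < E := lt_of_lt_of_le one_pos hE1
  nlinarith [mul_le_mul_of_nonneg_left hDW (le_of_lt hE0), mul_nonneg hW0 (sub_nonneg.2 hE1)]
end

section
/- Let ℓ ≥ 4 be an integer and W ≥ ℓ²·2^{ℓ+1} a real number. For 0 ≤ j ≤ ℓ - 3, define f_j(t) = exp((t^{ℓ-1}+t)W)·exp(-(ℓ-3-j)(2t)^{ℓ-1}) and h_j(t) = f_j'(t)/2. Then for every t ≥ 0, h_j(t) ≥ (W/2)·(t^{ℓ-2} f_j(t) + 1). -/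
set_option maxHeartbeats 1000000 in
theorem hj_lower_bound_removed (ℓ : ℕ) (hℓ : 4 ≤ ℓ) (W : ℝ) (hW : (ℓ : ℝ) ^ 2 * 2 ^ (ℓ + 1) ≤ W)
    (j : ℕ) (hj : j ≤ ℓ - 3) (t : ℝ) (ht : 0 ≤ t) :
    W / 2 * (t ^ (ℓ - 2) *
        (Real.exp ((t ^ (ℓ - 1) + t) * W) * Real.exp (-(((ℓ - 3 - j : ℕ) : ℝ)) * (2 * t) ^ (ℓ - 1))) + 1)
      ≤ deriv (fun s : ℝ =>
          Real.exp ((s ^ (ℓ - 1) + s) * W) * Real.exp (-(((ℓ - 3 - j : ℕ) : ℝ)) * (2 * s) ^ (ℓ - 1))) t / 2 := by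
  have hc0 : (0 : ℝ) ≤ ((ℓ - 3 - j : ℕ) : ℝ) := Nat.cast_nonneg _
  have hcle : ((ℓ - 3 - j : ℕ) : ℝ) ≤ (ℓ : ℝ) - 3 := by
    have h1 : (ℓ - 3 - j : ℕ) ≤ ℓ - 3 := Nat.sub_le _ _
    have h2 : ((ℓ - 3 : ℕ) : ℝ) = (ℓ : ℝ) - 3 := by
      have h3 : (3 : ℕ) ≤ ℓ := by omega
      push_cast [Nat.cast_sub h3]; ring
    calc ((ℓ - 3 - j : ℕ) : ℝ) ≤ ((ℓ - 3 : ℕ) : ℝ) := Nat.cast_le.mpr h1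
      _ = (ℓ : ℝ) - 3 := h2
  have hl1 : ((ℓ - 1 : ℕ) : ℝ) = (ℓ : ℝ) - 1 := by
    have h3 : (1 : ℕ) ≤ ℓ := by omega
    push_cast [Nat.cast_sub h3]; ring
  have hℓR : (4 : ℝ) ≤ (ℓ : ℝ) := by exact_mod_cast hℓ
  -- derivative computation
  have hA : HasDerivAt (fun s : ℝ => (s ^ (ℓ - 1) + s) * W)
      ((((ℓ - 1 : ℕ) : ℝ) * t ^ (ℓ - 2) + 1) * W) t := by
    have h1 : HasDerivAt (fun s : ℝ => s ^ (ℓ - 1))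
        (((ℓ - 1 : ℕ) : ℝ) * t ^ (ℓ - 1 - 1)) t := hasDerivAt_pow _ t
    have h2 := (h1.add (hasDerivAt_id t)).mul_const W
    simpa [show ℓ - 1 - 1 = ℓ - 2 by omega] using h2
  have hB : HasDerivAt (fun s : ℝ => -((ℓ - 3 - j : ℕ) : ℝ) * (2 * s) ^ (ℓ - 1))
      (-((ℓ - 3 - j : ℕ) : ℝ) * ((((ℓ - 1 : ℕ) : ℝ) * (2 * t) ^ (ℓ - 2)) * 2)) t := by
    have h2 : HasDerivAt (fun s : ℝ => 2 * s) 2 t := by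
      simpa using (hasDerivAt_id t).const_mul (2 : ℝ)
    have h3 := (h2.pow (ℓ - 1)).const_mul (-((ℓ - 3 - j : ℕ) : ℝ))
    simpa [show ℓ - 1 - 1 = ℓ - 2 by omega, mul_assoc] using h3
  have hderiv : deriv (fun s : ℝ =>
      Real.exp ((s ^ (ℓ - 1) + s) * W) * Real.exp (-((ℓ - 3 - j : ℕ) : ℝ) * (2 * s) ^ (ℓ - 1))) t
      = Real.exp ((t ^ (ℓ - 1) + t) * W) * Real.exp (-((ℓ - 3 - j : ℕ) : ℝ) * (2 * t) ^ (ℓ - 1)) *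
        (((((ℓ - 1 : ℕ) : ℝ) * t ^ (ℓ - 2) + 1) * W) +
          (-((ℓ - 3 - j : ℕ) : ℝ) * ((((ℓ - 1 : ℕ) : ℝ) * (2 * t) ^ (ℓ - 2)) * 2))) := by
    have h := (hA.exp.mul hB.exp).deriv
    refine h.trans ?_; ring
  rw [hderiv, hl1]
  -- abbreviations as atoms
  obtain ⟨L, hL⟩ : ∃ L : ℝ, L = (ℓ : ℝ) := ⟨_, rfl⟩
  obtain ⟨C, hC⟩ : ∃ C : ℝ, C = ((ℓ - 3 - j : ℕ) : ℝ) := ⟨_, rfl⟩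
  obtain ⟨x, hx⟩ : ∃ x : ℝ, x = t ^ (ℓ - 2) := ⟨_, rfl⟩
  obtain ⟨y, hy⟩ : ∃ y : ℝ, y = t ^ (ℓ - 1) := ⟨_, rfl⟩
  obtain ⟨P, hP⟩ : ∃ P : ℝ, P = (2 : ℝ) ^ (ℓ - 2) := ⟨_, rfl⟩
  have hx0 : 0 ≤ x := hx ▸ pow_nonneg ht _
  have hy0 : 0 ≤ y := hy ▸ pow_nonneg ht _
  have hP0 : 0 < P := hP ▸ pow_pos (by norm_num) _
  have hP1 : (1 : ℝ) ≤ P := by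
    rw [hP]; exact one_le_pow₀ (by norm_num)
  have hpow1 : (2 : ℝ) ^ (ℓ - 1) = P * 2 := by
    rw [hP, ← pow_succ, show ℓ - 2 + 1 = ℓ - 1 by omega]
  have hpow2 : (2 : ℝ) ^ (ℓ + 1) = P * 8 := by
    rw [hP, show (8:ℝ) = 2 ^ 3 by norm_num, ← pow_add, show ℓ - 2 + 3 = ℓ + 1 by omega]
  have h2t1 : (2 * t) ^ (ℓ - 1) = P * 2 * y := by
    rw [mul_pow, hpow1, hy]
  have h2t2 : (2 * t) ^ (ℓ - 2) = P * x := by rw [mul_pow, hP, hx]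
  have hW' : L ^ 2 * (P * 8) ≤ W := by rw [hL, ← hpow2]; exact hW
  have hL4 : (4 : ℝ) ≤ L := hL ▸ hℓR
  have hC0 : 0 ≤ C := hC ▸ hc0
  have hCle : C ≤ L - 3 := by rw [hC, hL]; exact hcle
  have hW0 : (0 : ℝ) ≤ W := le_trans (by positivity) hW'
  -- key coefficient bound : C * (L - 1) * (P * 2) ≤ (L - 2) * W
  have hP2 : (0:ℝ) ≤ P * 2 := by positivity
  have hL1 : (0:ℝ) ≤ L - 1 := by linarith
  have key : C * (L - 1) * (P * 2) ≤ (L - 2) * W := by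
    have h1 : C * (L - 1) * (P * 2) ≤ (L - 3) * (L - 1) * (P * 2) :=
      mul_le_mul_of_nonneg_right (mul_le_mul_of_nonneg_right hCle hL1) hP2
    have h2 : (L - 3) * (L - 1) * (P * 2) ≤ L ^ 2 * (P * 8) := by nlinarith
    have h3 : W ≤ (L - 2) * W := by nlinarith
    linarith
  have hCP : C * (P * 2) ≤ W := by
    have h1 : C * (P * 2) ≤ C * (L - 1) * (P * 2) := by
      nlinarith [mul_nonneg (mul_nonneg hC0 (by linarith : (0:ℝ) ≤ L - 2)) hP2]
    have h2 : C * (L - 1) * (P * 2) ≤ W := by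
      have h4 : (L - 2) * W ≤ (L - 2) * ((L - 2) * W) := by nlinarith
      nlinarith [mul_nonneg (mul_nonneg hC0 hL1) hP2]
    linarith
  -- F ≥ 1
  have hF1 : (1 : ℝ) ≤ Real.exp ((t ^ (ℓ - 1) + t) * W) *
      Real.exp (-((ℓ - 3 - j : ℕ) : ℝ) * (2 * t) ^ (ℓ - 1)) := by
    rw [← Real.exp_add]
    have hsum : (0 : ℝ) ≤ (t ^ (ℓ - 1) + t) * W + -((ℓ - 3 - j : ℕ) : ℝ) * (2 * t) ^ (ℓ - 1) := by
      rw [h2t1, ← hy, ← hC]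
      nlinarith [mul_nonneg ht hW0, mul_nonneg hy0 (sub_nonneg.mpr hCP)]
    calc (1 : ℝ) = Real.exp 0 := Real.exp_zero.symm
      _ ≤ _ := Real.exp_le_exp.mpr hsum
  obtain ⟨F, hF⟩ : ∃ F : ℝ, F = Real.exp ((t ^ (ℓ - 1) + t) * W) *
      Real.exp (-((ℓ - 3 - j : ℕ) : ℝ) * (2 * t) ^ (ℓ - 1)) := ⟨_, rfl⟩
    -- rewrite goal in atoms
  rw [← hF, h2t2, ← hC, ← hx, ← hL]
  have hF1' : (1 : ℝ) ≤ F := hF ▸ hF1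
  -- g ≥ W + W x
  have hg : W + W * x ≤ ((L - 1) * x + 1) * W + -C * ((L - 1) * (P * x) * 2) := by
    nlinarith [mul_nonneg hx0 (sub_nonneg.mpr key)]
  have main : W * (x * F + 1) ≤ F * (((L - 1) * x + 1) * W + -C * ((L - 1) * (P * x) * 2)) := by
    have step1 : F * (W + W * x) ≤ F * (((L - 1) * x + 1) * W + -C * ((L - 1) * (P * x) * 2)) :=
      mul_le_mul_of_nonneg_left hg (by linarith)
    have step2 : W * (x * F + 1) ≤ F * (W + W * x) := by
      nlinarith [mul_nonneg hW0 hx0]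
    linarith
  linarith
end
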